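/- arXiv:2001.11386 — 2 statements merged into one kernel-verified Lean document; each statement's English description precedes it below -/
import Mathlib

section
/- Let d be a natural number and let v : Fin (d+1) → (Fin d → ℚ) be a family of nonzero vectors (v i ≠ 0 for all i) whose ℚ-span is all of ℚ^d. Call an index i heavy if there exist j ≠ i and λ ∈ ℚ with v i = λ • v j. Then the number of heavy indices is either 0 or exactly 2. -/
open scoped Classical

/-- If two of the `d+1` vectors lie in the span of the remaining `d-1` vectors,
we get a contradiction with the spanning hypothesis (rank count). -/
lemma drop_two_aux {d : ℕ} (hd : 0 < d) (v : Fin (d + 1) → (Fin d → ℚ))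
    (hspan : Submodule.span ℚ (Set.range v) = ⊤)
    (a b : Fin (d + 1)) (hab : a ≠ b)
    (ha : v a ∈ Submodule.span ℚ (v '' {i | i ≠ a ∧ i ≠ b}))
    (hb : v b ∈ Submodule.span ℚ (v '' {i | i ≠ a ∧ i ≠ b})) : False := by
  have htop : Submodule.span ℚ (v '' {i | i ≠ a ∧ i ≠ b}) = ⊤ := by
    rw [eq_top_iff, ← hspan, Submodule.span_le]
    rintro _ ⟨i, rfl⟩
    by_cases hia : i = a
    · subst hia; exact ha
    by_cases hib : i = b
    · subst hib; exact hb
    exact Submodule.subset_span ⟨i, ⟨hia, hib⟩, rfl⟩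
  set s : Finset (Fin d → ℚ) := Finset.image v (Finset.univ \ {a, b}) with hs_def
  have hs : (s : Set (Fin d → ℚ)) = v '' {i | i ≠ a ∧ i ≠ b} := by
    ext x
    simp [hs_def, Set.mem_image, not_or]
  have h1 : Module.finrank ℚ (Fin d → ℚ) ≤ s.card := by
    have := finrank_span_finset_le_card (R := ℚ) s
    rw [hs] at this
    simp only [Set.finrank] at this
    rw [htop] at this
    rwa [finrank_top] at this
  have h2 : s.card ≤ d - 1 := by
    have h3 : (Finset.univ \ ({a, b} : Finset (Fin (d + 1)))).card = d - 1 := by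
      rw [Finset.card_sdiff_of_subset (Finset.subset_univ _)]
      rw [Finset.card_insert_of_notMem (by simpa using hab), Finset.card_singleton]
      simp
    calc s.card ≤ (Finset.univ \ ({a, b} : Finset (Fin (d + 1)))).card :=
          Finset.card_image_le
      _ = d - 1 := h3
  have h4 : Module.finrank ℚ (Fin d → ℚ) = d := Module.finrank_fin_fun ℚ
  omega

theorem heavy_count_zero_or_two (d : ℕ) (v : Fin (d + 1) → (Fin d → ℚ))
    (hnz : ∀ i, v i ≠ 0)
    (hspan : Submodule.span ℚ (Set.range v) = ⊤) :
    (Finset.univ.filter (fun i => ∃ j, j ≠ i ∧ ∃ lam : ℚ, v i = lam • v j)).card = 0 ∨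
      (Finset.univ.filter (fun i => ∃ j, j ≠ i ∧ ∃ lam : ℚ, v i = lam • v j)).card = 2 := by
  rcases Nat.eq_zero_or_pos d with hd | hd
  · subst hd
    exact absurd (funext fun x => x.elim0) (hnz 0)
  set H := Finset.univ.filter (fun i => ∃ j, j ≠ i ∧ ∃ lam : ℚ, v i = lam • v j) with hH
  have memH : ∀ i, i ∈ H ↔ ∃ j, j ≠ i ∧ ∃ lam : ℚ, v i = lam • v j := by
    intro i; simp [hH]
  -- any heavy index has a nonzero proportionality witness
  have wit : ∀ i ∈ H, ∃ j, j ≠ i ∧ ∃ lam : ℚ, lam ≠ 0 ∧ v i = lam • v j := by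
    intro i hi
    obtain ⟨j, hji, lam, hlam⟩ := (memH i).1 hi
    refine ⟨j, hji, lam, ?_, hlam⟩
    rintro rfl
    exact hnz i (by simpa using hlam)
  -- symmetry: the witness of a heavy index is heavy
  have symm : ∀ i ∈ H, ∀ j, j ≠ i → ∀ lam : ℚ, lam ≠ 0 → v i = lam • v j → j ∈ H := by
    intro i _ j hji lam hlam heq
    refine (memH j).2 ⟨i, Ne.symm hji, lam⁻¹, ?_⟩
    rw [heq, smul_smul, inv_mul_cancel₀ hlam, one_smul]
  -- any two distinct heavy indices are proportional
  have prop2 : ∀ i ∈ H, ∀ k ∈ H, i ≠ k → ∃ mu : ℚ, mu ≠ 0 ∧ v i = mu • v k := by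
    intro i hi k hk hik
    obtain ⟨i', hi'i, lam, hlam, hveq⟩ := wit i hi
    obtain ⟨k', hk'k, mu, hmu, hveq'⟩ := wit k hk
    by_cases hik' : i' = k
    · exact ⟨lam, hlam, by rw [hveq, hik']⟩
    by_cases hki' : k' = i
    · refine ⟨mu⁻¹, inv_ne_zero hmu, ?_⟩
      rw [hveq', hki', smul_smul, inv_mul_cancel₀ hmu, one_smul]
    exfalso
    refine drop_two_aux hd v hspan i k hik ?_ ?_
    · rw [hveq]
      exact Submodule.smul_mem _ _
        (Submodule.subset_span ⟨i', ⟨hi'i, hik'⟩, rfl⟩)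
    · rw [hveq']
      exact Submodule.smul_mem _ _ (Submodule.subset_span ⟨k', ⟨hki', hk'k⟩, rfl⟩)
  -- H is empty or has at least 2 elements
  rcases Finset.eq_empty_or_nonempty H with he | ⟨i, hi⟩
  · left; simp [he]
  right
  obtain ⟨j, hji, lam, hlam, heq⟩ := wit i hi
  have hjH : j ∈ H := symm i hi j hji lam hlam heq
  -- at most 2
  have hle : H.card ≤ 2 := by
    by_contra hgt
    push_neg at hgt
    have : ({i, j} : Finset (Fin (d + 1))) ⊆ H := by
      intro x hx
      simp only [Finset.mem_insert, Finset.mem_singleton] at hx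
      rcases hx with rfl | rfl
      · exact hi
      · exact hjH
    have hcard : ({i, j} : Finset (Fin (d + 1))).card = 2 := by
      rw [Finset.card_insert_of_notMem (by simpa using (Ne.symm hji)), Finset.card_singleton]
    have hne : (H \ ({i, j} : Finset (Fin (d + 1)))).Nonempty := by
      rw [← Finset.card_pos, Finset.card_sdiff_of_subset this, hcard]
      omega
    obtain ⟨k, hk⟩ := hne
    rw [Finset.mem_sdiff] at hk
    obtain ⟨hkH, hknotin⟩ := hk
    simp only [Finset.mem_insert, Finset.mem_singleton, not_or] at hknotin
    obtain ⟨hki, hkj⟩ := hknotin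
    obtain ⟨mu, hmu, hmueq⟩ := prop2 j hjH i hi hji
    obtain ⟨nu, hnu, hnueq⟩ := prop2 k hkH i hi hki
    refine drop_two_aux hd v hspan j k (Ne.symm hkj) ?_ ?_
    · rw [hmueq]
      exact Submodule.smul_mem _ _ (Submodule.subset_span ⟨i, ⟨Ne.symm hji, Ne.symm hki⟩, rfl⟩)
    · rw [hnueq]
      exact Submodule.smul_mem _ _ (Submodule.subset_span ⟨i, ⟨Ne.symm hji, Ne.symm hki⟩, rfl⟩)
  have hge : 2 ≤ H.card := by
    have : ({i, j} : Finset (Fin (d + 1))) ⊆ H := by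
      intro x hx
      simp only [Finset.mem_insert, Finset.mem_singleton] at hx
      rcases hx with rfl | rfl
      · exact hi
      · exact hjH
    calc 2 = ({i, j} : Finset (Fin (d + 1))).card := by
          rw [Finset.card_insert_of_notMem (by simpa using (Ne.symm hji)), Finset.card_singleton]
      _ ≤ H.card := Finset.card_le_card this
  omega
end

section
/- Let R be a commutative ring and let u ∈ R satisfy u * u = 0. Let m be a natural number, x : Rˣ a unit, w : Fin m → Rˣ a family of units, A : Fin m → R, and γ ∈ R. Set e := ∏ i, ((w i : R) * (x : R) + A i * u). Then e + γ * (∑ j, ∏ i ∈ Finset.univ.erase j, (w i : R)) * (x : R)^(m−1) * u = e * (1 + γ * (∑ i, ↑((w i)⁻¹)) * ↑(x⁻¹) * u). -/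
private lemma prod_mul_u {R : Type*} [CommRing R] (u : R) (hu : u * u = 0)
    {ι : Type*} [DecidableEq ι] (s : Finset ι) (f g : ι → R) :
    (∏ i ∈ s, (f i + g i * u)) * u = (∏ i ∈ s, f i) * u := by
  induction s using Finset.induction with
  | empty => simp
  | @insert a s h ih =>
    rw [Finset.prod_insert h, Finset.prod_insert h]
    linear_combination (f a + g a * u) * ih + g a * (∏ i ∈ s, f i) * hu

theorem chern_top_restrict_identity {R : Type*} [CommRing R] (u : R) (hu : u * u = 0)
    (m : ℕ) (x : Rˣ) (w : Fin m → Rˣ) (A : Fin m → R) (γ : R) :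
    (∏ i, ((w i : R) * (x : R) + A i * u)) +
        γ * (∑ j, ∏ i ∈ Finset.univ.erase j, (w i : R)) * (x : R) ^ (m - 1) * u =
      (∏ i, ((w i : R) * (x : R) + A i * u)) *
        (1 + γ * (∑ i, (↑((w i)⁻¹) : R)) * (↑(x⁻¹) : R) * u) := by
  rcases Nat.eq_zero_or_pos m with hm | hm
  · subst hm; simp
  have key : (∏ i, ((w i : R) * (x : R) + A i * u)) * u
      = (∏ i, (w i : R)) * (x : R) ^ m * u := by
    rw [prod_mul_u u hu]
    simp [Finset.prod_mul_distrib]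
  have erase_eq : ∀ j : Fin m, ∏ i ∈ Finset.univ.erase j, (w i : R)
      = (∏ i, (w i : R)) * ((w j)⁻¹ : Rˣ) := by
    intro j
    rw [← Finset.prod_erase_mul Finset.univ _ (Finset.mem_univ j)]
    rw [mul_assoc]
    simp
  rw [mul_add, mul_one]
  congr 1
  rw [show (∏ i, ((w i : R) * (x : R) + A i * u)) *
      (γ * (∑ i, (↑((w i)⁻¹) : R)) * (↑(x⁻¹) : R) * u)
      = (∏ i, ((w i : R) * (x : R) + A i * u)) * u *
      (γ * (∑ i, (↑((w i)⁻¹) : R)) * (↑(x⁻¹) : R)) by ring, key]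
  have hx : (x : R) ^ m * (↑(x⁻¹) : R) = (x : R) ^ (m - 1) := by
    conv_lhs => rw [show m = (m - 1) + 1 by omega]
    rw [pow_succ, mul_assoc]
    simp
  calc γ * (∑ j, ∏ i ∈ Finset.univ.erase j, (w i : R)) * (x : R) ^ (m - 1) * u
      = γ * (∑ j, (∏ i, (w i : R)) * ((w j)⁻¹ : Rˣ)) * ((x : R) ^ m * (↑(x⁻¹) : R)) * u := by
        rw [hx, Finset.sum_congr rfl fun j _ => erase_eq j]
    _ = (∏ i, (w i : R)) * (x : R) ^ m * u * (γ * (∑ i, (↑((w i)⁻¹) : R)) * (↑(x⁻¹) : R)) := by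
        rw [← Finset.mul_sum]; ring
end
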